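/- Consider the system ṙ = Ar with A = diag(λ₁, λ₂, λ₃) where λ₃ < λ₂ < λ₁ < 0 (all distinct, all negative), and initial value with x₀y₀z₀ ≠ 0. Then the curvature κ(t) of the trajectory satisfies: κ(t) → 0 if 2λ₁ > λ₂; κ(t) tends to a positive constant if 2λ₁ = λ₂; and κ(t) → +∞ if 2λ₁ < λ₂, as t → +∞. -/

import Mathlib

open Matrix Real Filter

noncomputable def e3norm (a : Fin 3 → ℝ) : ℝ := Real.sqrt (∑ i, (a i) ^ 2)

/-- Curvature of a space curve `r`. -/
noncomputable def curv (r : ℝ → Fin 3 → ℝ) (t : ℝ) : ℝ :=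
  e3norm (crossProduct (deriv r t) (deriv (deriv r) t)) / (e3norm (deriv r t)) ^ 3

private lemma hasDerivAt_cexp (c l s : ℝ) :
    HasDerivAt (fun s => c * Real.exp (l * s)) (l * c * Real.exp (l * s)) s := by
  have h := (((hasDerivAt_id s).const_mul l).exp).const_mul c
  refine h.congr_deriv ?_
  simp only [id]
  ring

private lemma exp_decay {c : ℝ} (hc : c < 0) :
    Tendsto (fun t : ℝ => Real.exp (c * t)) atTop (nhds 0) := by
  have h1 : Tendsto (fun t : ℝ => c * t) atTop atBot := by
    simpa using (tendsto_id (α := ℝ)).const_mul_atTop_of_neg hc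
  exact Real.tendsto_exp_atBot.comp h1

private lemma exp_grow {c : ℝ} (hc : 0 < c) :
    Tendsto (fun t : ℝ => Real.exp (c * t)) atTop atTop := by
  exact Real.tendsto_exp_atTop.comp (Tendsto.const_mul_atTop hc tendsto_id)

theorem curvature_limit_diagonal_negative
    (l1 l2 l3 x0 y0 z0 : ℝ)
    (h32 : l3 < l2) (h21 : l2 < l1) (h1 : l1 < 0)
    (h0 : x0 * y0 * z0 ≠ 0)
    (r : ℝ → Fin 3 → ℝ)
    (hr : r = fun t => ![x0 * Real.exp (l1 * t), y0 * Real.exp (l2 * t),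
      z0 * Real.exp (l3 * t)]) :
    (2 * l1 > l2 → Tendsto (curv r) atTop (nhds 0)) ∧
      (2 * l1 = l2 → ∃ C : ℝ, 0 < C ∧ Tendsto (curv r) atTop (nhds C)) ∧
      (2 * l1 < l2 → Tendsto (curv r) atTop atTop) := by
  have hx0 : x0 ≠ 0 := fun h => h0 (by simp [h])
  have hy0 : y0 ≠ 0 := fun h => h0 (by simp [h])
  have hz0 : z0 ≠ 0 := fun h => h0 (by simp [h])
  have hl1 : l1 ≠ 0 := ne_of_lt h1
  have hl2 : l2 ≠ 0 := ne_of_lt (by linarith)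
  have hl3 : l3 ≠ 0 := ne_of_lt (by linarith)
  -- derivatives
  have hd1 : deriv r = fun t => ![l1 * x0 * Real.exp (l1 * t),
      l2 * y0 * Real.exp (l2 * t), l3 * z0 * Real.exp (l3 * t)] := by
    funext t
    apply HasDerivAt.deriv
    rw [hr, hasDerivAt_pi]
    intro i
    fin_cases i <;>
      simpa only [Matrix.cons_val_zero, Matrix.cons_val_one, Matrix.head_cons,
        Matrix.cons_val_two, Matrix.tail_cons, Fin.isValue, Fin.reduceFinMk] using hasDerivAt_cexp _ _ t
  have hd2 : deriv (deriv r) = fun t => ![l1 * (l1 * x0) * Real.exp (l1 * t),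
      l2 * (l2 * y0) * Real.exp (l2 * t), l3 * (l3 * z0) * Real.exp (l3 * t)] := by
    rw [hd1]
    funext t
    apply HasDerivAt.deriv
    rw [hasDerivAt_pi]
    intro i
    fin_cases i <;>
      simpa only [Matrix.cons_val_zero, Matrix.cons_val_one, Matrix.head_cons,
        Matrix.cons_val_two, Matrix.tail_cons, Fin.isValue, Fin.reduceFinMk] using hasDerivAt_cexp _ _ t
  -- the key closed form for the curvature
  have key : ∀ t, curv r t = Real.exp ((l2 - 2*l1)*t) *
      Real.sqrt (((l1*l2*(l2-l1)*x0*y0)^2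
          + (l1*l3*(l1-l3)*x0*z0)^2 * Real.exp (2*(l3-l2)*t)
          + (l2*l3*(l3-l2)*y0*z0)^2 * Real.exp (2*(l3-l1)*t)) /
        ((l1*x0)^2 + (l2*y0)^2 * Real.exp (2*(l2-l1)*t)
          + (l3*z0)^2 * Real.exp (2*(l3-l1)*t))^3) := by
    intro t
    have hE1 : (0:ℝ) < Real.exp (l1*t) := Real.exp_pos _
    have hE2 : (0:ℝ) < Real.exp (l2*t) := Real.exp_pos _
    have hE3 : (0:ℝ) < Real.exp (l3*t) := Real.exp_pos _
    have e1 : Real.exp (2*(l3-l2)*t) = Real.exp (l3*t)^2 / Real.exp (l2*t)^2 := by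
      rw [sq, sq, ← Real.exp_add, ← Real.exp_add, ← Real.exp_sub]
      congr 1; ring
    have e2 : Real.exp (2*(l3-l1)*t) = Real.exp (l3*t)^2 / Real.exp (l1*t)^2 := by
      rw [sq, sq, ← Real.exp_add, ← Real.exp_add, ← Real.exp_sub]
      congr 1; ring
    have e3 : Real.exp (2*(l2-l1)*t) = Real.exp (l2*t)^2 / Real.exp (l1*t)^2 := by
      rw [sq, sq, ← Real.exp_add, ← Real.exp_add, ← Real.exp_sub]
      congr 1; ring
    have e4 : Real.exp ((l2-2*l1)*t) = Real.exp (l2*t) / Real.exp (l1*t)^2 := by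
      rw [sq, ← Real.exp_add, ← Real.exp_sub]
      congr 1; ring
    set nf : ℝ := (l1*l2*(l2-l1)*x0*y0)^2 + (l1*l3*(l1-l3)*x0*z0)^2 * Real.exp (2*(l3-l2)*t)
        + (l2*l3*(l3-l2)*y0*z0)^2 * Real.exp (2*(l3-l1)*t) with hnf
    set df : ℝ := (l1*x0)^2 + (l2*y0)^2 * Real.exp (2*(l2-l1)*t)
        + (l3*z0)^2 * Real.exp (2*(l3-l1)*t) with hdf
    have hnf0 : 0 ≤ nf := by rw [hnf]; positivity
    have hdf0 : 0 < df := by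
      have hne : l1 * x0 ≠ 0 := mul_ne_zero hl1 hx0
      have h1' : (0:ℝ) < (l1*x0)^2 := by positivity
      have h2' : (0:ℝ) ≤ (l2*y0)^2 * Real.exp (2*(l2-l1)*t) := by positivity
      have h3' : (0:ℝ) ≤ (l3*z0)^2 * Real.exp (2*(l3-l1)*t) := by positivity
      rw [hdf]; linarith
    rw [hd1] at hd2
    simp only [curv, hd2, hd1, e3norm, cross_apply, Fin.sum_univ_three,
      Matrix.cons_val_zero, Matrix.cons_val_one, Matrix.head_cons,
      Matrix.cons_val_two, Matrix.tail_cons]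
    have hN : (l2 * y0 * Real.exp (l2 * t) * (l3 * (l3 * z0) * Real.exp (l3 * t)) -
          l3 * z0 * Real.exp (l3 * t) * (l2 * (l2 * y0) * Real.exp (l2 * t))) ^ 2 +
        (l3 * z0 * Real.exp (l3 * t) * (l1 * (l1 * x0) * Real.exp (l1 * t)) -
          l1 * x0 * Real.exp (l1 * t) * (l3 * (l3 * z0) * Real.exp (l3 * t))) ^ 2 +
        (l1 * x0 * Real.exp (l1 * t) * (l2 * (l2 * y0) * Real.exp (l2 * t)) -
          l2 * y0 * Real.exp (l2 * t) * (l1 * (l1 * x0) * Real.exp (l1 * t))) ^ 2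
        = (Real.exp (l1*t) * Real.exp (l2*t))^2 * nf := by
      rw [hnf, e1, e2]
      field_simp
      ring
    have hD : (l1 * x0 * Real.exp (l1 * t)) ^ 2 + (l2 * y0 * Real.exp (l2 * t)) ^ 2 +
        (l3 * z0 * Real.exp (l3 * t)) ^ 2 = Real.exp (l1*t)^2 * df := by
      rw [hdf, e2, e3]
      field_simp
    rw [hN, hD, e4]
    rw [Real.sqrt_mul (by positivity), Real.sqrt_mul (by positivity),
      Real.sqrt_sq (by positivity), Real.sqrt_sq hE1.le,
      Real.sqrt_div hnf0, show df^3 = df^2 * df by ring,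
      Real.sqrt_mul (by positivity), Real.sqrt_sq hdf0.le]
    set sn := Real.sqrt nf with hsn
    clear_value sn
    set sd := Real.sqrt df with hsdd
    clear_value sd
    have hdfsd : df = sd ^ 2 := by rw [hsdd, Real.sq_sqrt hdf0.le]
    have hsd : 0 < sd := by rw [hsdd]; exact Real.sqrt_pos.mpr hdf0
    rw [hdfsd]
    field_simp
  -- limits of the bounded factor
  have hApos : (0:ℝ) < (l1*l2*(l2-l1)*x0*y0)^2 := by
    have : l1*l2*(l2-l1)*x0*y0 ≠ 0 :=
      mul_ne_zero (mul_ne_zero (mul_ne_zero (mul_ne_zero hl1 hl2)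
        (sub_ne_zero.mpr (ne_of_lt h21))) hx0) hy0
    positivity
  have ha1pos : (0:ℝ) < (l1*x0)^2 := by
    have : l1 * x0 ≠ 0 := mul_ne_zero hl1 hx0
    positivity
  have hnum : Tendsto (fun t => (l1*l2*(l2-l1)*x0*y0)^2
      + (l1*l3*(l1-l3)*x0*z0)^2 * Real.exp (2*(l3-l2)*t)
      + (l2*l3*(l3-l2)*y0*z0)^2 * Real.exp (2*(l3-l1)*t)) atTop
      (nhds ((l1*l2*(l2-l1)*x0*y0)^2)) := by
    have := (tendsto_const_nhds (x := (l1*l2*(l2-l1)*x0*y0)^2) (f := atTop)).add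
      (((exp_decay (show 2*(l3-l2) < 0 by linarith)).const_mul ((l1*l3*(l1-l3)*x0*z0)^2)).add
        ((exp_decay (show 2*(l3-l1) < 0 by linarith)).const_mul ((l2*l3*(l3-l2)*y0*z0)^2)))
    simpa [add_assoc] using this
  have hden : Tendsto (fun t => (l1*x0)^2 + (l2*y0)^2 * Real.exp (2*(l2-l1)*t)
      + (l3*z0)^2 * Real.exp (2*(l3-l1)*t)) atTop (nhds ((l1*x0)^2)) := by
    have := (tendsto_const_nhds (x := (l1*x0)^2) (f := atTop)).add
      (((exp_decay (show 2*(l2-l1) < 0 by linarith)).const_mul ((l2*y0)^2)).add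
        ((exp_decay (show 2*(l3-l1) < 0 by linarith)).const_mul ((l3*z0)^2)))
    simpa [add_assoc] using this
  have hglim : Tendsto (fun t => Real.sqrt (((l1*l2*(l2-l1)*x0*y0)^2
      + (l1*l3*(l1-l3)*x0*z0)^2 * Real.exp (2*(l3-l2)*t)
      + (l2*l3*(l3-l2)*y0*z0)^2 * Real.exp (2*(l3-l1)*t)) /
      ((l1*x0)^2 + (l2*y0)^2 * Real.exp (2*(l2-l1)*t)
      + (l3*z0)^2 * Real.exp (2*(l3-l1)*t))^3)) atTop
      (nhds (Real.sqrt ((l1*l2*(l2-l1)*x0*y0)^2 / ((l1*x0)^2)^3))) :=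
    (hnum.div (hden.pow 3) (pow_ne_zero 3 (ne_of_gt ha1pos))).sqrt
  have hLpos : 0 < Real.sqrt ((l1*l2*(l2-l1)*x0*y0)^2 / ((l1*x0)^2)^3) :=
    Real.sqrt_pos.mpr (div_pos hApos (pow_pos ha1pos 3))
  refine ⟨?_, ?_, ?_⟩
  · intro h
    rw [tendsto_congr key]
    have := (exp_decay (show l2 - 2*l1 < 0 by linarith)).mul hglim
    simpa using this
  · intro h
    refine ⟨_, hLpos, ?_⟩
    rw [tendsto_congr key]
    have hz : l2 - 2*l1 = 0 := by linarith
    simpa [hz] using hglim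
  · intro h
    rw [tendsto_congr key]
    exact Tendsto.atTop_mul_pos hLpos (exp_grow (by linarith)) hglim
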